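/- arXiv:2312.11971 — 3 statements merged into one kernel-verified Lean document; each statement's English description precedes it below -/
import Mathlib

section
/- Let T be a 2×2 real matrix and S a 2×2 invertible complex matrix satisfying S σ_j σ_l S⁻¹ T_{hj} T_{ml} = σ_h σ_m for all h, m ∈ {1,2} (summation over j,l ∈ {1,2}). Then T Tᵗ = 𝟙 and S σ₃ S⁻¹ = (det T⁻¹) σ₃. -/
open Matrix

noncomputable def pauli2 : Fin 2 → Matrix (Fin 2) (Fin 2) ℂ
  | 0 => !![0, 1; 1, 0]
  | 1 => !![0, -Complex.I; Complex.I, 0]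

noncomputable def sigma3 : Matrix (Fin 2) (Fin 2) ℂ := !![1, 0; 0, -1]

/-- If `S σ_j σ_l S⁻¹ T_{hj} T_{ml} = σ_h σ_m` for all `h, m ∈ {1,2}`, then
`T Tᵗ = 𝟙` and `S σ₃ S⁻¹ = (det T⁻¹) σ₃`. -/
theorem pauli_cov_implies_orthogonal (S : Matrix (Fin 2) (Fin 2) ℂ) (hS : IsUnit S)
    (T : Matrix (Fin 2) (Fin 2) ℝ)
    (h1 : ∀ h m : Fin 2,
      ∑ j : Fin 2, ∑ l : Fin 2,
          ((T h j : ℂ) * (T m l : ℂ)) • (S * (pauli2 j * pauli2 l) * S⁻¹)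
        = pauli2 h * pauli2 m) :
    T * Tᵀ = 1 ∧ S * sigma3 * S⁻¹ = ((T⁻¹).det : ℂ) • sigma3 := by
  have hSd : IsUnit S.det := (Matrix.isUnit_iff_isUnit_det S).mp hS
  have hSS : S * S⁻¹ = 1 := Matrix.mul_nonsing_inv S hSd
  set X : Matrix (Fin 2) (Fin 2) ℂ := S * sigma3 * S⁻¹ with hX
  have p00 : pauli2 0 * pauli2 0 = 1 := by simp [pauli2, Matrix.one_fin_two]
  have p11 : pauli2 1 * pauli2 1 = 1 := by simp [pauli2, Matrix.one_fin_two]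
  have p01 : pauli2 0 * pauli2 1 = Complex.I • sigma3 := by
    simp [pauli2, sigma3, Matrix.smul_of, Matrix.smul_cons]
  have p10 : pauli2 1 * pauli2 0 = (-Complex.I) • sigma3 := by
    simp [pauli2, sigma3, Matrix.smul_of, Matrix.smul_cons]
  have key : ∀ h m : Fin 2,
      ((T h 0 : ℂ) * (T m 0 : ℂ) + (T h 1 : ℂ) * (T m 1 : ℂ)) • (1 : Matrix (Fin 2) (Fin 2) ℂ)
        + (((T h 0 : ℂ) * (T m 1 : ℂ) - (T h 1 : ℂ) * (T m 0 : ℂ)) * Complex.I) • X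
      = pauli2 h * pauli2 m := by
    intro h m
    have hk := h1 h m
    simp only [Fin.sum_univ_two, p00, p01, p10, p11, Matrix.mul_one, hSS,
      Matrix.mul_smul, Matrix.smul_mul, ← hX] at hk
    rw [← hk]
    module
  have E : ∀ h m i j : Fin 2,
      ((T h 0 : ℂ) * (T m 0 : ℂ) + (T h 1 : ℂ) * (T m 1 : ℂ)) * (1 : Matrix (Fin 2) (Fin 2) ℂ) i j
        + (((T h 0 : ℂ) * (T m 1 : ℂ) - (T h 1 : ℂ) * (T m 0 : ℂ)) * Complex.I) * X i j
      = (pauli2 h * pauli2 m) i j := by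
    intro h m i j
    have hk := congrFun (congrFun (key h m) i) j
    simpa [Matrix.add_apply, Matrix.smul_apply, smul_eq_mul] using hk
  have ha : (T 0 0 : ℂ) * (T 0 0 : ℂ) + (T 0 1 : ℂ) * (T 0 1 : ℂ) = 1 := by
    have e := E 0 0 0 0
    rw [p00] at e
    simp [Matrix.one_apply] at e
    linear_combination e
  have hc : (T 1 0 : ℂ) * (T 1 0 : ℂ) + (T 1 1 : ℂ) * (T 1 1 : ℂ) = 1 := by
    have e := E 1 1 0 0
    rw [p11] at e
    simp [Matrix.one_apply] at e
    linear_combination e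
  have e1 := E 0 1 0 0
  have e2 := E 1 0 0 0
  rw [p01] at e1; rw [p10] at e2
  simp [Matrix.one_apply, Matrix.smul_apply, sigma3] at e1 e2
  have hs : (T 0 0 : ℂ) * (T 1 0 : ℂ) + (T 0 1 : ℂ) * (T 1 1 : ℂ) = 0 := by
    linear_combination (1/2 : ℂ) * e1 + (1/2 : ℂ) * e2
  have hIx : Complex.I * (((T 0 0 : ℂ) * (T 1 1 : ℂ) - (T 0 1 : ℂ) * (T 1 0 : ℂ)) * X 0 0)
      = Complex.I * 1 := by
    linear_combination (1/2 : ℂ) * e1 - (1/2 : ℂ) * e2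
  have hx00 : ((T 0 0 : ℂ) * (T 1 1 : ℂ) - (T 0 1 : ℂ) * (T 1 0 : ℂ)) * X 0 0 = 1 :=
    mul_left_cancel₀ Complex.I_ne_zero hIx
  have f1 := E 0 1 1 1
  have f2 := E 1 0 1 1
  rw [p01] at f1; rw [p10] at f2
  simp [Matrix.one_apply, Matrix.smul_apply, sigma3] at f1 f2
  have hIx' : Complex.I * (((T 0 0 : ℂ) * (T 1 1 : ℂ) - (T 0 1 : ℂ) * (T 1 0 : ℂ)) * X 1 1)
      = Complex.I * (-1) := by
    linear_combination (1/2 : ℂ) * f1 - (1/2 : ℂ) * f2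
  have hx11 : ((T 0 0 : ℂ) * (T 1 1 : ℂ) - (T 0 1 : ℂ) * (T 1 0 : ℂ)) * X 1 1 = -1 :=
    mul_left_cancel₀ Complex.I_ne_zero hIx'
  have g1 := E 0 1 0 1
  have g2 := E 0 1 1 0
  rw [p01] at g1 g2
  simp [Matrix.one_apply, Matrix.smul_apply, sigma3] at g1 g2
  have hd2 : ((T 0 0 : ℂ) * (T 1 1 : ℂ) - (T 0 1 : ℂ) * (T 1 0 : ℂ)) ^ 2 = 1 := by
    linear_combination ((T 1 0 : ℂ) * (T 1 0 : ℂ) + (T 1 1 : ℂ) * (T 1 1 : ℂ)) * ha + hc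
      + (-((T 0 0 : ℂ) * (T 1 0 : ℂ) + (T 0 1 : ℂ) * (T 1 1 : ℂ))) * hs
  have hdne : (T 0 0 : ℂ) * (T 1 1 : ℂ) - (T 0 1 : ℂ) * (T 1 0 : ℂ) ≠ 0 := by
    intro h0
    rw [h0] at hd2
    norm_num at hd2
  have hx01 : X 0 1 = 0 := g1.resolve_left hdne
  have hx10 : X 1 0 = 0 := g2.resolve_left hdne
  have hTT : T * Tᵀ = 1 := by
    ext i j
    fin_cases i <;> fin_cases j <;>
      simp [Matrix.mul_apply, Fin.sum_univ_two, Matrix.one_apply]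
    · exact_mod_cast ha
    · exact_mod_cast hs
    · have h' : (T 1 0 : ℂ) * (T 0 0 : ℂ) + (T 1 1 : ℂ) * (T 0 1 : ℂ) = 0 := by
        linear_combination hs
      exact_mod_cast h'
    · exact_mod_cast hc
  refine ⟨hTT, ?_⟩
  have hTdet : ((T⁻¹).det : ℂ) = (T 0 0 : ℂ) * (T 1 1 : ℂ) - (T 0 1 : ℂ) * (T 1 0 : ℂ) := by
    have hinv : T⁻¹ = Tᵀ := Matrix.inv_eq_right_inv hTT
    rw [hinv, Matrix.det_transpose, Matrix.det_fin_two]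
    push_cast
    ring
  rw [hTdet]
  ext i j
  fin_cases i <;> fin_cases j <;> simp [Matrix.smul_apply, sigma3, hx01, hx10]
  · linear_combination ((T 0 0 : ℂ) * (T 1 1 : ℂ) - (T 0 1 : ℂ) * (T 1 0 : ℂ)) * hx00
      - X 0 0 * hd2
  · linear_combination ((T 0 0 : ℂ) * (T 1 1 : ℂ) - (T 0 1 : ℂ) * (T 1 0 : ℂ)) * hx11
      - X 1 1 * hd2
end

section
/- There is no pair (ς, η) with ς ∈ [0,2π), η = (η₁, η₂) ∈ ℝ² with √(η₁² + η₂²) an odd multiple of π/2, such that for all j ∈ {1,2}: −σ_j + (2 η_j η_l / |η|²) σ_l = sin(ς) σ_j + cos(ς) ε_{3jl} σ_l (summation over l ∈ {1,2}). In other words, no anti-rotation T ∈ O(2)∖SO(2) together with S = exp(−i(η₁σ₁ + η₂σ₂)) satisfies the Dirac covariance condition S σ_j* S⁻¹ T_{hj} = σ_h. -/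
/-!
Comparing coefficients of `σ₁, σ₂` (which are linearly independent) turns the two covariance
equations into an identity of real `2 × 2` matrices: the reflection `2 n nᵀ - 1`, `n = η / |η|`,
would equal `sin ς • 1 + cos ς • J` with `J` antisymmetric. The left side is symmetric and
traceless, which forces `sin ς = cos ς = 0`.
-/

open Matrix

noncomputable def pauli : Fin 3 → Matrix (Fin 2) (Fin 2) ℂ
  | 0 => !![0, 1; 1, 0]
  | 1 => !![0, -Complex.I; Complex.I, 0]
  | 2 => !![1, 0; 0, -1]

/-- The Levi-Civita symbol on `Fin 3`. -/
def leviCivita (i j k : Fin 3) : ℤ :=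
  (((i : ℤ) - j) * ((j : ℤ) - k) * ((k : ℤ) - i)) / 2

open Real

theorem linearIndependent_pauli_zero_one : LinearIndependent ℂ ![pauli 0, pauli 1] := by
  refine LinearIndependent.pair_iff.2 fun s t h => ?_
  have h01 := congrFun (congrFun h 0) 1
  have h10 := congrFun (congrFun h 1) 0
  simp only [pauli, smul_of, smul_cons, smul_eq_mul, mul_zero, mul_one, smul_empty, mul_neg,
    Fin.isValue, Matrix.add_apply, of_apply, cons_val', cons_val_one, cons_val_fin_one, cons_val_zero,
    Matrix.zero_apply] at h01 h10
  have ht : t * Complex.I = 0 := by linear_combination (h10 - h01) / 2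
  exact ⟨by linear_combination (h01 + h10) / 2, by simpa using ht⟩

theorem false_of_reflection_eq_sin_cos_rotation {η₁ η₂ ς : ℝ} (hη : η₁ ^ 2 + η₂ ^ 2 ≠ 0)
    (h₁₁ : 2 * η₁ * η₁ / (η₁ ^ 2 + η₂ ^ 2) - 1 = sin ς)
    (h₂₂ : 2 * η₂ * η₂ / (η₁ ^ 2 + η₂ ^ 2) - 1 = sin ς)
    (h₁₂ : 2 * η₁ * η₂ / (η₁ ^ 2 + η₂ ^ 2) = cos ς)
    (h₂₁ : 2 * η₂ * η₁ / (η₁ ^ 2 + η₂ ^ 2) = -cos ς) : False := by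
  have htrace : 2 * η₁ * η₁ / (η₁ ^ 2 + η₂ ^ 2) + 2 * η₂ * η₂ / (η₁ ^ 2 + η₂ ^ 2) = 2 := by
    field_simp
  have hsin : sin ς = 0 := by linarith
  have hcos : cos ς = 0 := by rw [mul_right_comm] at h₂₁; linarith
  simpa [hsin, hcos] using sin_sq_add_cos_sq ς

/-- There is no pair `(ς, η)` with `ς ∈ [0,2π)`, `η = (η₁,η₂) ∈ ℝ²` with
`√(η₁² + η₂²)` an odd multiple of `π/2`, such that for all `j ∈ {1,2}`:
`−σ_j + (2 η_j η_l / |η|²) σ_l = sin(ς) σ_j + cos(ς) ε_{3jl} σ_l`. -/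
theorem no_antirotation_dirac_cov :
    ¬ ∃ (ς η₁ η₂ : ℝ),
        ς ∈ Set.Ico (0 : ℝ) (2 * Real.pi) ∧
        (∃ k : ℕ, Real.sqrt (η₁ ^ 2 + η₂ ^ 2) = (2 * (k : ℝ) + 1) * (Real.pi / 2)) ∧
        (∀ j : Fin 2,
          -(pauli j.castSucc)
            + ∑ l : Fin 2,
                ((2 * (![η₁, η₂] j) * (![η₁, η₂] l) / (η₁ ^ 2 + η₂ ^ 2) : ℝ) : ℂ) •
                  pauli l.castSucc
          = (Real.sin ς : ℂ) • pauli j.castSucc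
            + (Real.cos ς : ℂ) •
                ∑ l : Fin 2, (leviCivita 2 j.castSucc l.castSucc : ℂ) • pauli l.castSucc) := by
  rintro ⟨ς, η₁, η₂, -, ⟨k, hk⟩, hcov⟩
  -- At `η = 0` the quotients are junk `0`, and `ς = 3π/2` would solve the equations.
  have hη : η₁ ^ 2 + η₂ ^ 2 ≠ 0 := fun h => by
    rw [h, sqrt_zero] at hk
    exact (by positivity : (2 * (k : ℝ) + 1) * (π / 2) ≠ 0) hk.symm
  have hε : leviCivita 2 0 0 = 0 ∧ leviCivita 2 0 1 = 1 ∧ leviCivita 2 1 0 = -1 ∧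
      leviCivita 2 1 1 = 0 := by decide
  have hcov₁ := hcov 0
  have hcov₂ := hcov 1
  simp only [Fin.sum_univ_two, Fin.isValue, Fin.castSucc_zero, Fin.castSucc_one, hε,
    Int.cast_zero, cons_val_zero, cons_val_one] at hcov₁ hcov₂
  set s := η₁ ^ 2 + η₂ ^ 2
  obtain ⟨h₁₁, h₁₂⟩ := LinearIndependent.pair_iff.1 linearIndependent_pauli_zero_one
    (((2 * η₁ * η₁ / s - 1 - sin ς : ℝ)) : ℂ) ((2 * η₁ * η₂ / s - cos ς : ℝ) : ℂ)
    (by push_cast; linear_combination (norm := module) hcov₁)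
  obtain ⟨h₂₁, h₂₂⟩ := LinearIndependent.pair_iff.1 linearIndependent_pauli_zero_one
    (((2 * η₂ * η₁ / s + cos ς : ℝ)) : ℂ) ((2 * η₂ * η₂ / s - 1 - sin ς : ℝ) : ℂ)
    (by push_cast; linear_combination (norm := module) hcov₂)
  norm_cast at h₁₁ h₁₂ h₂₁ h₂₂
  exact false_of_reflection_eq_sin_cos_rotation hη (sub_eq_zero.1 h₁₁) (sub_eq_zero.1 h₂₂)
    (sub_eq_zero.1 h₁₂) (eq_neg_of_add_eq_zero_left h₂₁)
end

section
/- For 0 < α < 1, in the sense of distributions on the circle, the Fourier series (1/2π) Σ_{ℓ∈ℤ} e^{iπ(ℓ − |ℓ+α|)} e^{iℓφ} equals cos(πα) δ(φ) + (i/π) sin(πα) p.v.(1/(e^{iφ} − 1)), where δ is the 2π-periodic Dirac delta and p.v. denotes the Cauchy principal value. -/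
open Real MeasureTheory Filter

namespace FourierScatteringAux

open Finset

lemma geomIcc0 (z : ℂ) (hz : z ≠ 0) (N : ℕ) :
    (∑ ℓ ∈ Finset.Icc (0:ℤ) (N:ℤ), z ^ ℓ) * (z - 1) = z ^ ((N:ℤ)+1) - 1 := by
  induction N with
  | zero => simp
  | succ n ih =>
    have h : Finset.Icc (0:ℤ) ((n+1:ℕ):ℤ) = insert ((n:ℤ)+1) (Finset.Icc (0:ℤ) (n:ℤ)) := by
      ext x; simp; omega
    rw [h, Finset.sum_insert (by simp), add_mul, ih]
    have : ((n+1:ℕ):ℤ) + 1 = ((n:ℤ)+1) + 1 := by push_cast; ring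
    rw [this]
    simp only [zpow_add₀ hz, zpow_one]
    ring

lemma geomIccNeg (z : ℂ) (hz : z ≠ 0) (N : ℕ) :
    (∑ ℓ ∈ Finset.Icc (-(N:ℤ)) (-1:ℤ), z ^ ℓ) * (z - 1) = 1 - z ^ (-(N:ℤ)) := by
  induction N with
  | zero => simp
  | succ n ih =>
    have h : Finset.Icc (-((n+1:ℕ):ℤ)) (-1:ℤ) = insert (-(n:ℤ)-1) (Finset.Icc (-(n:ℤ)) (-1:ℤ)) := by
      ext x; simp; omega
    rw [h, Finset.sum_insert (by simp), add_mul, ih]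
    have h2 : -((n+1:ℕ):ℤ) = (-(n:ℤ)) + (-1) := by push_cast; ring
    have h3 : (-(n:ℤ)) - 1 = (-(n:ℤ)) + (-1) := by ring
    rw [h2, h3, zpow_add₀ hz (-(n:ℤ)) (-1)]
    have hz1 : z ^ (-1:ℤ) = z⁻¹ := by simp
    rw [hz1]
    field_simp
    ring

lemma IccSplit (N : ℕ) : Finset.Icc (-(N:ℤ)) (N:ℤ)
    = Finset.Icc (-(N:ℤ)) (-1:ℤ) ∪ Finset.Icc (0:ℤ) (N:ℤ) := by
  ext x; simp; omega

lemma IccDisj (N : ℕ) : Disjoint (Finset.Icc (-(N:ℤ)) (-1:ℤ)) (Finset.Icc (0:ℤ) (N:ℤ)) := by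
  rw [Finset.disjoint_left]; intro a ha hb; simp at ha; simp at hb; omega

lemma coeff_eq (α : ℝ) (hα0 : 0 < α) (hα1 : α < 1) (ℓ : ℤ) :
    Complex.exp (Complex.I * Real.pi * ((ℓ : ℂ) - ((|(ℓ : ℝ) + α| : ℝ) : ℂ)))
      = if 0 ≤ ℓ then Complex.exp (-(((Real.pi * α : ℝ)) : ℂ) * Complex.I)
        else Complex.exp ((((Real.pi * α : ℝ)) : ℂ) * Complex.I) := by
  by_cases h : 0 ≤ ℓ
  · rw [if_pos h]
    have h0 : (0:ℝ) ≤ (ℓ:ℝ) := by exact_mod_cast h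
    have habs : |(ℓ : ℝ) + α| = (ℓ : ℝ) + α := abs_of_nonneg (by linarith)
    rw [habs]; congr 1; push_cast; ring
  · rw [if_neg h]
    have h0 : (ℓ:ℝ) ≤ -1 := by exact_mod_cast (by omega : ℓ ≤ -1)
    have habs : |(ℓ : ℝ) + α| = -((ℓ : ℝ) + α) := abs_of_neg (by linarith)
    rw [habs]
    have harg : Complex.I * (Real.pi:ℂ) * ((ℓ : ℂ) - ((-((ℓ:ℝ) + α) : ℝ) : ℂ))
        = (ℓ:ℤ) * (2 * (Real.pi:ℂ) * Complex.I) + ((Real.pi * α : ℝ) : ℂ) * Complex.I := by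
      push_cast; ring
    rw [harg, Complex.exp_add, Complex.exp_int_mul_two_pi_mul_I, one_mul]

lemma kernel_split (α : ℝ) (hα0 : 0 < α) (hα1 : α < 1) (N : ℕ) (t : ℝ) :
    (∑ ℓ ∈ Finset.Icc (-(N : ℤ)) (N : ℤ),
        Complex.exp (Complex.I * Real.pi * ((ℓ : ℂ) - ((|(ℓ : ℝ) + α| : ℝ) : ℂ))) *
          Complex.exp (Complex.I * (ℓ : ℂ) * (t : ℂ)))
      = (Real.cos (Real.pi * α) : ℂ) *
          (∑ ℓ ∈ Finset.Icc (-(N : ℤ)) (N : ℤ), (Complex.exp (Complex.I * t)) ^ ℓ)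
        - Complex.I * (Real.sin (Real.pi * α) : ℂ) *
          ((∑ ℓ ∈ Finset.Icc (0:ℤ) (N:ℤ), (Complex.exp (Complex.I * t)) ^ ℓ)
            - ∑ ℓ ∈ Finset.Icc (-(N:ℤ)) (-1:ℤ), (Complex.exp (Complex.I * t)) ^ ℓ) := by
  have hw : ∀ ℓ : ℤ, Complex.exp (Complex.I * (ℓ : ℂ) * (t : ℂ))
      = (Complex.exp (Complex.I * t)) ^ ℓ := by
    intro ℓ
    rw [← Complex.exp_int_mul]; congr 1; ring
  set r : ℂ := (((Real.pi * α : ℝ)) : ℂ) with hr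
  calc (∑ ℓ ∈ Finset.Icc (-(N : ℤ)) (N : ℤ),
        Complex.exp (Complex.I * Real.pi * ((ℓ : ℂ) - ((|(ℓ : ℝ) + α| : ℝ) : ℂ))) *
          Complex.exp (Complex.I * (ℓ : ℂ) * (t : ℂ)))
      = (∑ ℓ ∈ Finset.Icc (-(N:ℤ)) (-1:ℤ),
          Complex.exp (r * Complex.I) * (Complex.exp (Complex.I * t)) ^ ℓ)
        + ∑ ℓ ∈ Finset.Icc (0:ℤ) (N:ℤ),
            Complex.exp (-r * Complex.I) * (Complex.exp (Complex.I * t)) ^ ℓ := by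
        rw [IccSplit N, Finset.sum_union (IccDisj N)]
        congr 1
        · refine Finset.sum_congr rfl fun ℓ hl => ?_
          simp only [Finset.mem_Icc] at hl
          rw [coeff_eq α hα0 hα1 ℓ, if_neg (by omega), hw]
        · refine Finset.sum_congr rfl fun ℓ hl => ?_
          simp only [Finset.mem_Icc] at hl
          rw [coeff_eq α hα0 hα1 ℓ, if_pos (by omega), hw]
    _ = _ := by
        rw [← Finset.mul_sum, ← Finset.mul_sum, IccSplit N, Finset.sum_union (IccDisj N)]
        rw [Complex.exp_mul_I, Complex.exp_mul_I, Complex.cos_neg, Complex.sin_neg]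
        rw [← Complex.ofReal_cos, ← Complex.ofReal_sin]
        ring

lemma exp_ne_one {t : ℝ} (h0 : 0 < t) (h2 : t < 2*Real.pi) :
    Complex.exp (Complex.I * t) ≠ 1 := by
  intro h
  rw [Complex.exp_eq_one_iff] at h
  obtain ⟨n, hn⟩ := h
  have ht : t = n * (2*Real.pi) := by
    have := congrArg Complex.im hn
    simpa using this
  rcases le_or_gt n 0 with hn0 | hn0
  · have : (n:ℝ) ≤ 0 := by exact_mod_cast hn0
    nlinarith [Real.pi_pos]
  · have : (1:ℝ) ≤ (n:ℝ) := by exact_mod_cast hn0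
    nlinarith [Real.pi_pos]

lemma norm_exp_sub_one (t : ℝ) (h0 : 0 ≤ t) (h2 : t ≤ 2*Real.pi) :
    ‖Complex.exp (Complex.I * t) - 1‖ = 2 * Real.sin (t/2) := by
  have he : Complex.exp (Complex.I * t) - 1
      = ((Real.cos t - 1 : ℝ) : ℂ) + ((Real.sin t : ℝ) : ℂ) * Complex.I := by
    rw [mul_comm, Complex.exp_mul_I, ← Complex.ofReal_cos, ← Complex.ofReal_sin]
    push_cast; ring
  rw [he, Complex.norm_add_mul_I]
  have hs : (Real.cos t - 1)^2 + (Real.sin t)^2 = (2 * Real.sin (t/2))^2 := by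
    have h1 := Real.sin_sq_add_cos_sq t
    have h2 := Real.sin_sq_eq_half_sub (t/2)
    have h3 : 2 * (t/2) = t := by ring
    rw [h3] at h2
    nlinarith
  rw [hs, Real.sqrt_sq_eq_abs, abs_of_nonneg]
  have : 0 ≤ Real.sin (t/2) := Real.sin_nonneg_of_nonneg_of_le_pi (by linarith) (by linarith)
  linarith

lemma min_le_pi_sin (t : ℝ) (h0 : 0 ≤ t) (h2 : t ≤ 2*Real.pi) :
    min t (2*Real.pi - t) ≤ Real.pi * Real.sin (t/2) := by
  rcases le_or_gt t Real.pi with h | h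
  · have hj := Real.mul_le_sin (x := t/2) (by linarith) (by linarith)
    have e : 2/Real.pi*(t/2) = t/Real.pi := by ring
    rw [e] at hj
    have := (div_le_iff₀ Real.pi_pos).mp hj
    calc min t (2*Real.pi - t) ≤ t := min_le_left _ _
      _ ≤ Real.pi * Real.sin (t/2) := by linarith [this]
  · have hj := Real.mul_le_sin (x := (2*Real.pi - t)/2) (by linarith) (by linarith)
    have e : 2/Real.pi*((2*Real.pi-t)/2) = (2*Real.pi-t)/Real.pi := by ring
    have e2 : (2*Real.pi-t)/2 = Real.pi - t/2 := by ring
    rw [e, e2, Real.sin_pi_sub] at hj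
    have := (div_le_iff₀ Real.pi_pos).mp hj
    calc min t (2*Real.pi - t) ≤ 2*Real.pi - t := min_le_right _ _
      _ ≤ Real.pi * Real.sin (t/2) := by linarith [this]

lemma integrableOn_div_aux (h : ℝ → ℂ) (hh : ContDiff ℝ (⊤ : ℕ∞) h) (h0 : h 0 = 0)
    (h2 : h (2*Real.pi) = 0) :
    IntegrableOn (fun t => h t / (Complex.exp (Complex.I * t) - 1))
      (Set.Ioo 0 (2*Real.pi)) volume := by
  obtain ⟨C, hC⟩ := isCompact_Icc.exists_bound_of_continuousOn
    (((hh.continuous_deriv (by simp))).continuousOn :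
      ContinuousOn (deriv h) (Set.Icc 0 (2*Real.pi)))
  have hC0 : 0 ≤ C := le_trans (norm_nonneg _) (hC 0 ⟨le_refl _, by positivity⟩)
  have hdiff : ∀ x ∈ Set.Icc (0:ℝ) (2*Real.pi), DifferentiableAt ℝ h x :=
    fun x _ => hh.differentiable (by simp) x
  have hlip : ∀ x ∈ Set.Icc (0:ℝ) (2*Real.pi), ∀ y ∈ Set.Icc (0:ℝ) (2*Real.pi),
      ‖h y - h x‖ ≤ C * ‖y - x‖ := by
    intro x hx y hy
    exact (convex_Icc _ _).norm_image_sub_le_of_norm_deriv_le hdiff hC hx hy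
  have hbound : ∀ t ∈ Set.Ioo (0:ℝ) (2*Real.pi),
      ‖h t / (Complex.exp (Complex.I * t) - 1)‖ ≤ C * Real.pi / 2 := by
    intro t ht
    obtain ⟨ht0, ht2⟩ := ht
    have hsin : 0 < Real.sin (t/2) :=
      Real.sin_pos_of_pos_of_lt_pi (by linarith) (by linarith)
    rw [norm_div]
    have hden : ‖Complex.exp (Complex.I * t) - 1‖ = 2 * Real.sin (t/2) :=
      norm_exp_sub_one t ht0.le ht2.le
    rw [hden, div_le_iff₀ (by linarith)]
    have hnum : ‖h t‖ ≤ C * min t (2*Real.pi - t) := by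
      rcases min_cases t (2*Real.pi - t) with ⟨hm, _⟩ | ⟨hm, _⟩
      · rw [hm]
        have := hlip 0 ⟨le_refl _, by positivity⟩ t ⟨ht0.le, ht2.le⟩
        rw [h0, sub_zero, sub_zero, Real.norm_eq_abs, abs_of_pos ht0] at this
        exact this
      · rw [hm]
        have := hlip (2*Real.pi) ⟨by positivity, le_refl _⟩ t ⟨ht0.le, ht2.le⟩
        rw [h2, sub_zero, Real.norm_eq_abs, abs_of_neg (by linarith : t - 2*Real.pi < 0)] at this
        calc ‖h t‖ ≤ C * -(t - 2*Real.pi) := this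
          _ = C * (2*Real.pi - t) := by ring
    have := min_le_pi_sin t ht0.le ht2.le
    calc ‖h t‖ ≤ C * min t (2*Real.pi - t) := hnum
      _ ≤ C * (Real.pi * Real.sin (t/2)) := mul_le_mul_of_nonneg_left this hC0
      _ = C * Real.pi / 2 * (2 * Real.sin (t/2)) := by ring
  apply Measure.integrableOn_of_bounded (M := C * Real.pi / 2)
  · rw [Real.volume_Ioo]; exact ENNReal.ofReal_ne_top
  · exact (hh.continuous.measurable.div
      ((Complex.continuous_exp.comp (continuous_const.mul Complex.continuous_ofReal)).sub
        continuous_const).measurable).aestronglyMeasurable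
  · exact (ae_restrict_iff' measurableSet_Ioo).2 (Filter.Eventually.of_forall hbound)

lemma RL (g : ℝ → ℂ) (c : ℕ → ℝ)
    (hc : Tendsto (fun N => -(c N)/(2*Real.pi)) atTop (cocompact ℝ)) :
    Tendsto (fun N => ∫ t in Set.Ioo (0:ℝ) (2*Real.pi),
      Complex.exp (Complex.I * (c N) * t) * g t) atTop (nhds 0) := by
  set f : ℝ → ℂ := (Set.Ioo (0:ℝ) (2*Real.pi)).indicator g with hf
  have key := (Real.tendsto_integral_exp_smul_cocompact f).comp hc
  have heq : ∀ N, ∫ t in Set.Ioo (0:ℝ) (2*Real.pi), Complex.exp (Complex.I * (c N) * t) * g t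
      = ∫ v : ℝ, Real.fourierChar (-(v * (-(c N)/(2*Real.pi)))) • f v := by
    intro N
    rw [← integral_indicator measurableSet_Ioo]
    congr 1
    funext v
    by_cases hv : v ∈ Set.Ioo (0:ℝ) (2*Real.pi)
    · rw [hf, Set.indicator_of_mem hv, Set.indicator_of_mem hv, Circle.smul_def,
        Real.fourierChar_apply]
      congr 2
      have : 2 * Real.pi * -(v * (-(c N) / (2 * Real.pi))) = c N * v := by
        field_simp
      rw [this]
      push_cast
      ring
    · simp [hf, Set.indicator_of_notMem hv]
  apply Tendsto.congr (fun N => (heq N).symm)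
  exact key

lemma zpow_eq_exp (t : ℝ) (m : ℤ) :
    (Complex.exp (Complex.I*t))^m = Complex.exp (Complex.I * ((m:ℝ):ℂ) * t) := by
  rw [← Complex.exp_int_mul]
  congr 1
  push_cast
  ring

lemma w_sub (t : ℝ) : Complex.exp (Complex.I * ((2*Real.pi - t : ℝ) : ℂ))
    = (Complex.exp (Complex.I * t))⁻¹ := by
  rw [show Complex.I * ((2*Real.pi - t : ℝ):ℂ)
      = 2*(Real.pi:ℂ)*Complex.I + -(Complex.I*(t:ℂ)) by push_cast; ring,
    Complex.exp_add, Complex.exp_two_pi_mul_I, one_mul, Complex.exp_neg]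

lemma pv_pointwise (a b z : ℂ) (hz0 : z ≠ 0) (hz1 : z ≠ 1) :
    a / (z - 1) + b / (z⁻¹ - 1) = (a - b) / (z - 1) - b := by
  have hz1' : z⁻¹ - 1 ≠ 0 := by
    rw [sub_ne_zero, ne_eq, inv_eq_one]; exact hz1
  have hz1'' : z - 1 ≠ 0 := sub_ne_zero.2 hz1
  have hz1''' : (1:ℂ) - z ≠ 0 := fun h => hz1 (by linear_combination -h)
  field_simp
  ring

lemma dker_mul (z : ℂ) (hz : z ≠ 0) (N : ℕ) :
    (∑ ℓ ∈ Finset.Icc (-(N:ℤ)) (N:ℤ), z ^ ℓ) * (z - 1) = z ^ ((N:ℤ)+1) - z ^ (-(N:ℤ)) := by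
  rw [IccSplit N, Finset.sum_union (IccDisj N), add_mul, geomIcc0 z hz, geomIccNeg z hz]
  ring

lemma eker_pointwise (z : ℂ) (hz0 : z ≠ 0) (hz1 : z ≠ 1) (N : ℕ) (a b : ℂ) :
    ((∑ ℓ ∈ Finset.Icc (0:ℤ) (N:ℤ), z ^ ℓ) - ∑ ℓ ∈ Finset.Icc (-(N:ℤ)) (-1:ℤ), z ^ ℓ) * a
      + ((∑ ℓ ∈ Finset.Icc (0:ℤ) (N:ℤ), (z⁻¹) ^ ℓ)
          - ∑ ℓ ∈ Finset.Icc (-(N:ℤ)) (-1:ℤ), (z⁻¹) ^ ℓ) * b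
    = (z ^ ((N:ℤ)+1) + z ^ (-(N:ℤ))) * ((a - b)/(z-1)) - 2 * ((a - b)/(z-1)) + 2 * b := by
  have hzi : z⁻¹ ≠ 0 := inv_ne_zero hz0
  have hz1' : z - 1 ≠ 0 := sub_ne_zero.2 hz1
  set S := (∑ ℓ ∈ Finset.Icc (0:ℤ) (N:ℤ), z ^ ℓ) - ∑ ℓ ∈ Finset.Icc (-(N:ℤ)) (-1:ℤ), z ^ ℓ
    with hS
  set T := (∑ ℓ ∈ Finset.Icc (0:ℤ) (N:ℤ), (z⁻¹) ^ ℓ)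
      - ∑ ℓ ∈ Finset.Icc (-(N:ℤ)) (-1:ℤ), (z⁻¹) ^ ℓ with hT
  have h1 : S * (z - 1) = z ^ ((N:ℤ)+1) + z ^ (-(N:ℤ)) - 2 := by
    rw [hS, sub_mul, geomIcc0 z hz0 N, geomIccNeg z hz0 N]; ring
  have h2 : T * (z⁻¹ - 1) = (z⁻¹) ^ ((N:ℤ)+1) + (z⁻¹) ^ (-(N:ℤ)) - 2 := by
    rw [hT, sub_mul, geomIcc0 z⁻¹ hzi N, geomIccNeg z⁻¹ hzi N]; ring
  have e1 : (z⁻¹) ^ ((N:ℤ)+1) * z = z ^ (-(N:ℤ)) := by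
    rw [inv_zpow', ← zpow_add_one₀ hz0]
    congr 1; ring
  have e2 : (z⁻¹) ^ (-(N:ℤ)) * z = z ^ ((N:ℤ)+1) := by
    rw [inv_zpow', neg_neg, ← zpow_add_one₀ hz0]
  have hzz : (z⁻¹ - 1) * z = 1 - z := by field_simp
  have hTz : T * (1 - z) = z ^ (-(N:ℤ)) + z ^ ((N:ℤ)+1) - 2*z := by
    calc T * (1 - z) = T * (z⁻¹ - 1) * z := by rw [mul_assoc, hzz]
      _ = ((z⁻¹) ^ ((N:ℤ)+1) + (z⁻¹) ^ (-(N:ℤ)) - 2) * z := by rw [h2]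
      _ = (z⁻¹) ^ ((N:ℤ)+1) * z + (z⁻¹) ^ (-(N:ℤ)) * z - 2*z := by ring
      _ = z ^ (-(N:ℤ)) + z ^ ((N:ℤ)+1) - 2*z := by rw [e1, e2]
  have hST : T = 2 - S := by
    have h := mul_right_cancel₀ hz1'
      (show (S + T) * (z - 1) = 2 * (z - 1) by linear_combination h1 - hTz)
    linear_combination h
  rw [hST]
  set x := (a - b)/(z - 1) with hx
  have hc : x * (z - 1) = a - b := div_mul_cancel₀ _ hz1'
  linear_combination x * h1 - S * hc

lemma integral_w_zpow (ℓ : ℤ) :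
    ∫ t in Set.Ioc (0:ℝ) (2*Real.pi), (Complex.exp (Complex.I * t)) ^ ℓ
      = if ℓ = 0 then ((2*Real.pi : ℝ) : ℂ) else 0 := by
  rw [← intervalIntegral.integral_of_le (by positivity : (0:ℝ) ≤ 2*Real.pi)]
  by_cases h : ℓ = 0
  · subst h
    simp
  · rw [if_neg h]
    have he : ∀ t : ℝ, (Complex.exp (Complex.I * t)) ^ ℓ
        = Complex.exp (((ℓ:ℂ) * Complex.I) * (t:ℂ)) := by
      intro t; rw [zpow_eq_exp]; congr 1; push_cast; ring
    simp_rw [he]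
    rw [integral_exp_mul_complex (mul_ne_zero (Int.cast_ne_zero.2 h) Complex.I_ne_zero)]
    have h2 : (ℓ:ℂ) * Complex.I * ((2*Real.pi : ℝ):ℂ) = (ℓ:ℤ) * (2*(Real.pi:ℂ)*Complex.I) := by
      push_cast; ring
    rw [h2, Complex.exp_int_mul_two_pi_mul_I]
    simp

end FourierScatteringAux

open FourierScatteringAux

/-- For `0 < α < 1`, in the distributional sense on the circle,
`(1/2π) Σ_{ℓ∈ℤ} e^{iπ(ℓ − |ℓ+α|)} e^{iℓφ} = cos(πα) δ(φ) + (i/π) sin(πα) p.v.(1/(e^{iφ}−1))`: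
tested against any smooth `2π`-periodic `φ`, the symmetric partial sums converge to
`cos(πα) φ(0) + (i/π) sin(πα) L`, where `L` is the principal-value integral. -/
theorem fourier_series_scattering_kernel (α : ℝ) (hα0 : 0 < α) (hα1 : α < 1)
    (φ : ℝ → ℂ) (hφ : ContDiff ℝ (⊤ : ℕ∞) φ) (hper : ∀ t, φ (t + 2 * Real.pi) = φ t) :
    ∃ L : ℂ,
      Tendsto (fun ε : ℝ =>
          ∫ t in Set.Ioo ε (2 * Real.pi - ε), φ t / (Complex.exp (Complex.I * t) - 1))
        (nhdsWithin 0 (Set.Ioi 0)) (nhds L) ∧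
      Tendsto (fun N : ℕ =>
          ∫ t in Set.Ioc (0 : ℝ) (2 * Real.pi),
            (1 / (2 * (Real.pi : ℂ))) *
              (∑ ℓ ∈ Finset.Icc (-(N : ℤ)) (N : ℤ),
                Complex.exp (Complex.I * Real.pi * ((ℓ : ℂ) - ((|(ℓ : ℝ) + α| : ℝ) : ℂ))) *
                  Complex.exp (Complex.I * (ℓ : ℂ) * (t : ℂ))) * φ t)
        atTop
        (nhds ((Real.cos (Real.pi * α) : ℂ) * φ 0
          + Complex.I / (Real.pi : ℂ) * (Real.sin (Real.pi * α) : ℂ) * L)) := by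
  have pi_pos := Real.pi_pos
  have hφc : Continuous φ := hφ.continuous
  have hφ2π : φ (2*Real.pi) = φ 0 := by simpa using hper 0
  set g2 : ℝ → ℂ := fun t => (φ t - φ (2*Real.pi - t)) / (Complex.exp (Complex.I * t) - 1)
    with hg2def
  have hg2i : IntegrableOn g2 (Set.Ioo 0 (2*Real.pi)) volume := by
    apply integrableOn_div_aux
    · exact hφ.sub (hφ.comp (contDiff_const.sub contDiff_id))
    · simp [hφ2π]
    · simp [hφ2π]
  have hφsubc : Continuous (fun t : ℝ => φ (2*Real.pi - t)) :=
    hφc.comp (continuous_const.sub continuous_id)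
  have hφsubi : IntegrableOn (fun t : ℝ => φ (2*Real.pi - t)) (Set.Ioo 0 (2*Real.pi)) volume :=
    (hφsubc.integrableOn_Ioc).mono_set Set.Ioo_subset_Ioc_self
  set L : ℂ := (1/2) * ((∫ t in Set.Ioo (0:ℝ) (2*Real.pi), g2 t)
      - ∫ t in Set.Ioo (0:ℝ) (2*Real.pi), φ (2*Real.pi - t)) with hL
  refine ⟨L, ?_, ?_⟩
  · -- Principal value convergence
    set q : ℝ → ℂ := fun t => φ t / (Complex.exp (Complex.I * t) - 1) with hqdef
    set F : ℝ → ℂ := fun t => g2 t - φ (2*Real.pi - t) with hFdef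
    have hFi : IntegrableOn F (Set.Ioo 0 (2*Real.pi)) volume := hg2i.sub hφsubi
    have hwc : Continuous (fun t : ℝ => Complex.exp (Complex.I * t) - 1) :=
      (Complex.continuous_exp.comp (continuous_const.mul Complex.continuous_ofReal)).sub
        continuous_const
    have hq : ContinuousOn q (Set.Ioo 0 (2*Real.pi)) := by
      apply ContinuousOn.div hφc.continuousOn hwc.continuousOn
      intro t ht; exact sub_ne_zero.2 (exp_ne_one ht.1 ht.2)
    have hev : ∀ᶠ ε in nhdsWithin (0:ℝ) (Set.Ioi 0),
        (∫ t in Set.Ioo ε (2*Real.pi - ε), q t)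
          = (1/2 : ℂ) * ∫ t in Set.Ioo ε (2*Real.pi - ε), F t := by
      filter_upwards [Ioo_mem_nhdsGT_of_mem (Set.left_mem_Ico.2 pi_pos)] with ε hε
      obtain ⟨hε0, hεπ⟩ := hε
      have hle : ε ≤ 2*Real.pi - ε := by linarith
      have hIccsub : Set.Icc ε (2*Real.pi - ε) ⊆ Set.Ioo 0 (2*Real.pi) := fun x hx =>
        ⟨lt_of_lt_of_le hε0 hx.1, lt_of_le_of_lt hx.2 (by linarith)⟩
      have huIcc : Set.uIcc ε (2*Real.pi - ε) = Set.Icc ε (2*Real.pi-ε) := Set.uIcc_of_le hle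
      have hmapsto : ∀ x ∈ Set.Icc ε (2*Real.pi - ε),
          2*Real.pi - x ∈ Set.Icc ε (2*Real.pi - ε) := fun x hx =>
        ⟨by linarith [hx.2], by linarith [hx.1]⟩
      have hqint : IntervalIntegrable q volume ε (2*Real.pi - ε) := by
        apply ContinuousOn.intervalIntegrable
        rw [huIcc]; exact hq.mono hIccsub
      have hqint2 : IntervalIntegrable (fun x => q (2*Real.pi - x)) volume ε (2*Real.pi - ε) := by
        apply ContinuousOn.intervalIntegrable
        rw [huIcc]
        exact (hq.mono hIccsub).comp (continuous_const.sub continuous_id).continuousOn hmapsto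
      have e1 : ∫ t in Set.Ioo ε (2*Real.pi - ε), q t = ∫ t in ε..(2*Real.pi - ε), q t := by
        rw [intervalIntegral.integral_of_le hle, integral_Ioc_eq_integral_Ioo]
      have e1F : ∫ t in Set.Ioo ε (2*Real.pi - ε), F t = ∫ t in ε..(2*Real.pi - ε), F t := by
        rw [intervalIntegral.integral_of_le hle, integral_Ioc_eq_integral_Ioo]
      have hsubst : (∫ x in ε..(2*Real.pi - ε), q (2*Real.pi - x))
          = ∫ x in ε..(2*Real.pi - ε), q x := by
        have h := intervalIntegral.integral_comp_sub_left (a := ε) (b := 2*Real.pi - ε)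
          q (2*Real.pi)
        rw [show 2*Real.pi - (2*Real.pi - ε) = ε by ring] at h
        exact h
      have key : (∫ x in ε..(2*Real.pi - ε), (q x + q (2*Real.pi - x)))
          = ∫ x in ε..(2*Real.pi - ε), F x := by
        apply intervalIntegral.integral_congr
        intro x hx
        rw [huIcc] at hx
        obtain hx' := hIccsub hx
        have hz0 := Complex.exp_ne_zero (Complex.I * (x:ℂ))
        have hz1 := exp_ne_one hx'.1 hx'.2
        show φ x / (Complex.exp (Complex.I * x) - 1)
            + φ (2*Real.pi - x) / (Complex.exp (Complex.I * ((2*Real.pi - x : ℝ):ℂ)) - 1)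
          = (φ x - φ (2*Real.pi - x)) / (Complex.exp (Complex.I * x) - 1) - φ (2*Real.pi - x)
        rw [w_sub x]
        exact pv_pointwise (φ x) (φ (2*Real.pi - x)) _ hz0 hz1
      calc (∫ t in Set.Ioo ε (2*Real.pi - ε), q t)
          = ∫ t in ε..(2*Real.pi - ε), q t := e1
        _ = (1/2 : ℂ) * ((∫ x in ε..(2*Real.pi - ε), q x)
              + ∫ x in ε..(2*Real.pi - ε), q (2*Real.pi - x)) := by
            rw [hsubst]; ring
        _ = (1/2 : ℂ) * ∫ x in ε..(2*Real.pi - ε), (q x + q (2*Real.pi - x)) := by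
            rw [intervalIntegral.integral_add hqint hqint2]
        _ = (1/2 : ℂ) * ∫ t in Set.Ioo ε (2*Real.pi - ε), F t := by rw [key, e1F]
    have hlim : Tendsto (fun ε : ℝ => ∫ t in Set.Ioo ε (2*Real.pi - ε), F t)
        (nhdsWithin (0:ℝ) (Set.Ioi 0)) (nhds (∫ t in Set.Ioo (0:ℝ) (2*Real.pi), F t)) := by
      have hdct := MeasureTheory.tendsto_integral_filter_of_dominated_convergence
        (μ := volume.restrict (Set.Ioo (0:ℝ) (2*Real.pi)))
        (l := nhdsWithin (0:ℝ) (Set.Ioi 0))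
        (F := fun (ε : ℝ) (t : ℝ) => Set.indicator (Set.Ioo ε (2*Real.pi - ε)) F t)
        (f := F) (bound := fun t => ‖F t‖)
        (Filter.Eventually.of_forall fun ε =>
          (hFi.aestronglyMeasurable).indicator measurableSet_Ioo)
        (Filter.Eventually.of_forall fun ε => ae_of_all _ fun t =>
          norm_indicator_le_norm_self F t)
        hFi.norm
        ?_
      · apply Tendsto.congr' ?_ hdct
        filter_upwards [self_mem_nhdsWithin] with ε hε
        have hsub : Set.Ioo ε (2*Real.pi - ε) ⊆ Set.Ioo 0 (2*Real.pi) := fun x hx =>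
          ⟨lt_trans hε hx.1, lt_of_lt_of_le hx.2 (by linarith [le_of_lt (Set.mem_Ioi.1 hε)])⟩
        rw [MeasureTheory.setIntegral_indicator measurableSet_Ioo,
          Set.inter_eq_self_of_subset_right hsub]
      · rw [ae_restrict_iff' measurableSet_Ioo]
        apply ae_of_all
        intro t ht
        apply Tendsto.congr' ?_ tendsto_const_nhds
        filter_upwards [Ioo_mem_nhdsGT_of_mem
          (Set.left_mem_Ico.2 (lt_min ht.1 (by linarith [ht.2] : (0:ℝ) < 2*Real.pi - t)))] with ε hε
        have : t ∈ Set.Ioo ε (2*Real.pi - ε) := by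
          constructor
          · exact lt_of_lt_of_le hε.2 (min_le_left _ _)
          · have := lt_of_lt_of_le hε.2 (min_le_right _ _)
            linarith
        rw [Set.indicator_of_mem this]
    have hLF : L = (1/2 : ℂ) * ∫ t in Set.Ioo (0:ℝ) (2*Real.pi), F t := by
      rw [hL, MeasureTheory.integral_sub hg2i hφsubi]
    rw [hLF]
    exact Tendsto.congr' (Filter.EventuallyEq.symm hev) (hlim.const_mul (1/2 : ℂ))
  · -- Partial sums convergence
    have hwc : Continuous (fun t : ℝ => Complex.exp (Complex.I * (t:ℂ))) :=
      Complex.continuous_exp.comp (continuous_const.mul Complex.continuous_ofReal)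
    have hwne : ∀ t : ℝ, Complex.exp (Complex.I * (t:ℂ)) ≠ 0 := fun t => Complex.exp_ne_zero _
    have hzpowc : ∀ ℓ : ℤ, Continuous (fun t : ℝ => Complex.exp (Complex.I * (t:ℂ)) ^ ℓ) :=
      fun ℓ => hwc.zpow₀ ℓ (fun t => Or.inl (hwne t))
    have hzpow_norm : ∀ (ℓ : ℤ) (t : ℝ), ‖Complex.exp (Complex.I * (t:ℂ)) ^ ℓ‖ = 1 := by
      intro ℓ t
      rw [norm_zpow]
      have : ‖Complex.exp (Complex.I * (t:ℂ))‖ = 1 := by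
        rw [Complex.norm_exp]
        simp
      rw [this, one_zpow]
    have hDc : ∀ N : ℕ,
        Continuous (fun t : ℝ => ∑ ℓ ∈ Finset.Icc (-(N:ℤ)) (N:ℤ),
          Complex.exp (Complex.I * (t:ℂ)) ^ ℓ) :=
      fun N => continuous_finset_sum _ (fun ℓ _ => hzpowc ℓ)
    have hEc : ∀ N : ℕ,
        Continuous (fun t : ℝ => (∑ ℓ ∈ Finset.Icc (0:ℤ) (N:ℤ),
            Complex.exp (Complex.I * (t:ℂ)) ^ ℓ)
          - ∑ ℓ ∈ Finset.Icc (-(N:ℤ)) (-1:ℤ), Complex.exp (Complex.I * (t:ℂ)) ^ ℓ) :=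
      fun N => (continuous_finset_sum _ fun ℓ _ => hzpowc ℓ).sub
        (continuous_finset_sum _ fun ℓ _ => hzpowc ℓ)
    set DI : ℕ → ℂ := fun N => ∫ t in Set.Ioc (0:ℝ) (2*Real.pi),
      (∑ ℓ ∈ Finset.Icc (-(N:ℤ)) (N:ℤ), Complex.exp (Complex.I * (t:ℂ)) ^ ℓ) * φ t with hDI
    set EI : ℕ → ℂ := fun N => ∫ t in Set.Ioc (0:ℝ) (2*Real.pi),
      ((∑ ℓ ∈ Finset.Icc (0:ℤ) (N:ℤ), Complex.exp (Complex.I * (t:ℂ)) ^ ℓ)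
        - ∑ ℓ ∈ Finset.Icc (-(N:ℤ)) (-1:ℤ), Complex.exp (Complex.I * (t:ℂ)) ^ ℓ) * φ t
      with hEI
    -- rewrite the N-th integral
    have hrw : ∀ N : ℕ,
        (∫ t in Set.Ioc (0 : ℝ) (2 * Real.pi),
            (1 / (2 * (Real.pi : ℂ))) *
              (∑ ℓ ∈ Finset.Icc (-(N : ℤ)) (N : ℤ),
                Complex.exp (Complex.I * Real.pi * ((ℓ : ℂ) - ((|(ℓ : ℝ) + α| : ℝ) : ℂ))) *
                  Complex.exp (Complex.I * (ℓ : ℂ) * (t : ℂ))) * φ t)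
          = (Real.cos (Real.pi*α) : ℂ) * ((1/(2*(Real.pi:ℂ))) * DI N)
            - Complex.I * (Real.sin (Real.pi*α) : ℂ) * ((1/(2*(Real.pi:ℂ))) * EI N) := by
      intro N
      have hpt : ∀ t : ℝ, (1 / (2 * (Real.pi : ℂ))) *
              (∑ ℓ ∈ Finset.Icc (-(N : ℤ)) (N : ℤ),
                Complex.exp (Complex.I * Real.pi * ((ℓ : ℂ) - ((|(ℓ : ℝ) + α| : ℝ) : ℂ))) *
                  Complex.exp (Complex.I * (ℓ : ℂ) * (t : ℂ))) * φ t
          = (Real.cos (Real.pi*α) : ℂ) * ((1/(2*(Real.pi:ℂ))) *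
              ((∑ ℓ ∈ Finset.Icc (-(N:ℤ)) (N:ℤ), Complex.exp (Complex.I * (t:ℂ)) ^ ℓ) * φ t))
            - Complex.I * (Real.sin (Real.pi*α) : ℂ) * ((1/(2*(Real.pi:ℂ))) *
              (((∑ ℓ ∈ Finset.Icc (0:ℤ) (N:ℤ), Complex.exp (Complex.I * (t:ℂ)) ^ ℓ)
                - ∑ ℓ ∈ Finset.Icc (-(N:ℤ)) (-1:ℤ), Complex.exp (Complex.I * (t:ℂ)) ^ ℓ)
                  * φ t)) := by
        intro t
        rw [kernel_split α hα0 hα1 N t]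
        ring
      simp_rw [hpt]
      rw [MeasureTheory.integral_sub, MeasureTheory.integral_const_mul,
        MeasureTheory.integral_const_mul, MeasureTheory.integral_const_mul,
        MeasureTheory.integral_const_mul]
      · exact (((((hDc N).mul hφc).integrableOn_Ioc).const_mul _).const_mul _)
      · exact (((((hEc N).mul hφc).integrableOn_Ioc).const_mul _).const_mul _)
    -- Dirichlet part
    set g1 : ℝ → ℂ := fun t => (φ t - φ 0) / (Complex.exp (Complex.I * t) - 1) with hg1def
    have hg1i : IntegrableOn g1 (Set.Ioo 0 (2*Real.pi)) volume := by
      apply integrableOn_div_aux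
      · exact hφ.sub contDiff_const
      · simp
      · simp [hφ2π]
    have hRLmul : ∀ (g : ℝ → ℂ), IntegrableOn g (Set.Ioo 0 (2*Real.pi)) volume →
        ∀ m : ℤ, Integrable (fun t : ℝ => Complex.exp (Complex.I * (t:ℂ)) ^ m * g t)
          (volume.restrict (Set.Ioo (0:ℝ) (2*Real.pi))) := by
      intro g hg m
      exact Integrable.bdd_mul (c := 1) hg ((hzpowc m).aestronglyMeasurable)
        (ae_of_all _ fun t => le_of_eq (hzpow_norm m t))
    have hRLzpow : ∀ (g : ℝ → ℂ), IntegrableOn g (Set.Ioo 0 (2*Real.pi)) volume →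
        ∀ (m : ℕ → ℤ), Tendsto (fun N : ℕ => -((m N : ℝ))/(2*Real.pi)) atTop (cocompact ℝ) →
        Tendsto (fun N : ℕ => ∫ t in Set.Ioo (0:ℝ) (2*Real.pi),
          Complex.exp (Complex.I * (t:ℂ)) ^ (m N) * g t) atTop (nhds 0) := by
      intro g hg m hm
      have := RL g (fun N => ((m N : ℝ))) hm
      apply Tendsto.congr ?_ this
      intro N
      apply MeasureTheory.setIntegral_congr_fun measurableSet_Ioo
      intro t _
      simp only [zpow_eq_exp]
    have hcoc1 : Tendsto (fun N : ℕ => -((((N:ℤ)+1 : ℤ) : ℝ))/(2*Real.pi)) atTop (cocompact ℝ) := by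
      rw [cocompact_eq_atBot_atTop]
      apply Tendsto.mono_right _ le_sup_left
      apply Tendsto.atBot_div_const (by linarith : (0:ℝ) < 2*Real.pi)
      apply tendsto_neg_atTop_atBot.comp
      have : Tendsto (fun N : ℕ => ((N:ℝ))) atTop atTop := tendsto_natCast_atTop_atTop
      apply tendsto_atTop_mono (fun N => ?_) this
      push_cast
      linarith
    have hcoc2 : Tendsto (fun N : ℕ => -(((-(N:ℤ) : ℤ) : ℝ))/(2*Real.pi)) atTop (cocompact ℝ) := by
      rw [cocompact_eq_atBot_atTop]
      apply Tendsto.mono_right _ le_sup_right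
      apply Tendsto.atTop_div_const (by linarith : (0:ℝ) < 2*Real.pi)
      apply tendsto_atTop_mono (fun N => ?_) (tendsto_natCast_atTop_atTop (R := ℝ))
      push_cast
      linarith
    have hA : Tendsto (fun N => (1/(2*(Real.pi:ℂ))) * DI N) atTop (nhds (φ 0)) := by
      have hDdecomp : ∀ N : ℕ, DI N
          = ((∫ t in Set.Ioo (0:ℝ) (2*Real.pi),
                Complex.exp (Complex.I * (t:ℂ)) ^ ((N:ℤ)+1) * g1 t)
             - ∫ t in Set.Ioo (0:ℝ) (2*Real.pi),
                Complex.exp (Complex.I * (t:ℂ)) ^ (-(N:ℤ)) * g1 t)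
            + ((2*Real.pi : ℝ) : ℂ) * φ 0 := by
        intro N
        have hsplit : ∀ t : ℝ,
            (∑ ℓ ∈ Finset.Icc (-(N:ℤ)) (N:ℤ), Complex.exp (Complex.I * (t:ℂ)) ^ ℓ) * φ t
            = (∑ ℓ ∈ Finset.Icc (-(N:ℤ)) (N:ℤ), Complex.exp (Complex.I * (t:ℂ)) ^ ℓ)
                * (φ t - φ 0)
              + (∑ ℓ ∈ Finset.Icc (-(N:ℤ)) (N:ℤ), Complex.exp (Complex.I * (t:ℂ)) ^ ℓ)
                * φ 0 := by
          intro t; ring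
        rw [hDI]
        simp only [hsplit]
        rw [MeasureTheory.integral_add
          (f := fun t : ℝ => (∑ ℓ ∈ Finset.Icc (-(N:ℤ)) (N:ℤ),
            Complex.exp (Complex.I * (t:ℂ)) ^ ℓ) * (φ t - φ 0))
          (g := fun t : ℝ => (∑ ℓ ∈ Finset.Icc (-(N:ℤ)) (N:ℤ),
            Complex.exp (Complex.I * (t:ℂ)) ^ ℓ) * φ 0)
          (((hDc N).mul (hφc.sub continuous_const)).integrableOn_Ioc)
          (((hDc N).mul continuous_const).integrableOn_Ioc)]
        congr 1
        · -- Dirichlet kernel times (φ - φ 0)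
          rw [integral_Ioc_eq_integral_Ioo, ← MeasureTheory.integral_sub
            (hRLmul g1 hg1i ((N:ℤ)+1)) (hRLmul g1 hg1i (-(N:ℤ)))]
          apply MeasureTheory.setIntegral_congr_fun measurableSet_Ioo
          intro t ht
          have hz1 : Complex.exp (Complex.I * (t:ℂ)) ≠ 1 := exp_ne_one ht.1 ht.2
          have hdm := dker_mul (Complex.exp (Complex.I * (t:ℂ))) (hwne t) N
          have hc : g1 t * (Complex.exp (Complex.I * (t:ℂ)) - 1) = φ t - φ 0 :=
            div_mul_cancel₀ _ (sub_ne_zero.2 hz1)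
          show (∑ ℓ ∈ Finset.Icc (-(N:ℤ)) (N:ℤ), Complex.exp (Complex.I * (t:ℂ)) ^ ℓ)
              * (φ t - φ 0)
            = Complex.exp (Complex.I * (t:ℂ)) ^ ((N:ℤ)+1) * g1 t
              - Complex.exp (Complex.I * (t:ℂ)) ^ (-(N:ℤ)) * g1 t
          linear_combination (g1 t) * hdm
            - (∑ ℓ ∈ Finset.Icc (-(N:ℤ)) (N:ℤ), Complex.exp (Complex.I * (t:ℂ)) ^ ℓ) * hc
        · -- constant part
          rw [MeasureTheory.integral_mul_const, MeasureTheory.integral_finset_sum _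
            (fun ℓ _ => ((hzpowc ℓ).integrableOn_Ioc))]
          have : ∑ ℓ ∈ Finset.Icc (-(N:ℤ)) (N:ℤ),
              ∫ t in Set.Ioc (0:ℝ) (2*Real.pi), Complex.exp (Complex.I * (t:ℂ)) ^ ℓ
              = ((2*Real.pi : ℝ) : ℂ) := by
            have h1 : ∀ ℓ ∈ Finset.Icc (-(N:ℤ)) (N:ℤ),
                (∫ t in Set.Ioc (0:ℝ) (2*Real.pi), Complex.exp (Complex.I * (t:ℂ)) ^ ℓ)
                  = if ℓ = (0:ℤ) then ((2*Real.pi : ℝ) : ℂ) else 0 :=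
              fun ℓ _ => integral_w_zpow ℓ
            rw [Finset.sum_congr rfl h1, Finset.sum_ite_eq' (Finset.Icc (-(N:ℤ)) (N:ℤ)) (0:ℤ)
              (fun _ => ((2*Real.pi : ℝ) : ℂ))]
            simp
          rw [this]
      simp only [hDdecomp]
      have hT1 := hRLzpow g1 hg1i (fun N => (N:ℤ)+1) hcoc1
      have hT2 := hRLzpow g1 hg1i (fun N => -(N:ℤ)) hcoc2
      have := ((hT1.sub hT2).add_const (((2*Real.pi : ℝ) : ℂ) * φ 0)).const_mul
        (1/(2*(Real.pi:ℂ)))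
      simp only [sub_zero, zero_sub, zero_add, neg_zero] at this
      have hval : (1/(2*(Real.pi:ℂ))) * (((2*Real.pi : ℝ) : ℂ) * φ 0) = φ 0 := by
        have hπ : ((Real.pi : ℝ) : ℂ) ≠ 0 := Complex.ofReal_ne_zero.2 (ne_of_gt pi_pos)
        push_cast
        field_simp
      rwa [hval] at this
    -- E part
    have hB : Tendsto EI atTop (nhds (-2 * L)) := by
      have hEdecomp : ∀ N : ℕ, EI N = (1/2 : ℂ) *
          (((∫ t in Set.Ioo (0:ℝ) (2*Real.pi),
                Complex.exp (Complex.I*(t:ℂ)) ^ ((N:ℤ)+1) * g2 t)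
            + ∫ t in Set.Ioo (0:ℝ) (2*Real.pi),
                Complex.exp (Complex.I*(t:ℂ)) ^ (-(N:ℤ)) * g2 t)
           - 2 * (∫ t in Set.Ioo (0:ℝ) (2*Real.pi), g2 t)
           + 2 * ∫ t in Set.Ioo (0:ℝ) (2*Real.pi), φ (2*Real.pi - t)) := by
        intro N
        set f : ℝ → ℂ := fun t =>
          ((∑ ℓ ∈ Finset.Icc (0:ℤ) (N:ℤ), Complex.exp (Complex.I * (t:ℂ)) ^ ℓ)
            - ∑ ℓ ∈ Finset.Icc (-(N:ℤ)) (-1:ℤ), Complex.exp (Complex.I * (t:ℂ)) ^ ℓ) * φ t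
          with hfdef
        have hfc : Continuous f := (hEc N).mul hφc
        have hfint : IntervalIntegrable f volume 0 (2*Real.pi) :=
          hfc.intervalIntegrable _ _
        have hfsint : IntervalIntegrable (fun t => f (2*Real.pi - t)) volume 0 (2*Real.pi) :=
          (hfc.comp (continuous_const.sub continuous_id)).intervalIntegrable _ _
        have hsubst : (∫ x in (0:ℝ)..(2*Real.pi), f (2*Real.pi - x))
            = ∫ x in (0:ℝ)..(2*Real.pi), f x := by
          have h := intervalIntegral.integral_comp_sub_left (a := (0:ℝ)) (b := 2*Real.pi)
            f (2*Real.pi)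
          rw [sub_self, sub_zero] at h
          exact h
        have e0 : EI N = ∫ x in (0:ℝ)..(2*Real.pi), f x := by
          rw [intervalIntegral.integral_of_le (by positivity : (0:ℝ) ≤ 2*Real.pi)]
        have e1 : EI N = (1/2 : ℂ) * ∫ x in (0:ℝ)..(2*Real.pi), (f x + f (2*Real.pi - x)) := by
          rw [intervalIntegral.integral_add hfint hfsint, hsubst, e0]; ring
        have e2 : (∫ x in (0:ℝ)..(2*Real.pi), (f x + f (2*Real.pi - x)))
            = ∫ t in Set.Ioo (0:ℝ) (2*Real.pi), (f t + f (2*Real.pi - t)) := by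
          rw [intervalIntegral.integral_of_le (by positivity : (0:ℝ) ≤ 2*Real.pi),
            integral_Ioc_eq_integral_Ioo]
        have e3 : (∫ t in Set.Ioo (0:ℝ) (2*Real.pi), (f t + f (2*Real.pi - t)))
            = ∫ t in Set.Ioo (0:ℝ) (2*Real.pi),
                ((Complex.exp (Complex.I*(t:ℂ)) ^ ((N:ℤ)+1) * g2 t
                  + Complex.exp (Complex.I*(t:ℂ)) ^ (-(N:ℤ)) * g2 t)
                 - 2 * g2 t + 2 * φ (2*Real.pi - t)) := by
          apply MeasureTheory.setIntegral_congr_fun measurableSet_Ioo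
          intro t ht
          have hz0 := hwne t
          have hz1 : Complex.exp (Complex.I * (t:ℂ)) ≠ 1 := exp_ne_one ht.1 ht.2
          have hws : Complex.exp (Complex.I * ((2*Real.pi - t : ℝ):ℂ))
              = (Complex.exp (Complex.I * (t:ℂ)))⁻¹ := w_sub t
          have hek := eker_pointwise (Complex.exp (Complex.I * (t:ℂ))) hz0 hz1 N
            (φ t) (φ (2*Real.pi - t))
          simp only [hfdef, hg2def]
          rw [hws]
          linear_combination hek
        have hintX1 := hRLmul g2 hg2i ((N:ℤ)+1)
        have hintX2 := hRLmul g2 hg2i (-(N:ℤ))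
        have hintY : Integrable (fun t : ℝ => (2:ℂ) * g2 t)
            (volume.restrict (Set.Ioo (0:ℝ) (2*Real.pi))) := hg2i.const_mul 2
        have hintZ : Integrable (fun t : ℝ => (2:ℂ) * φ (2*Real.pi - t))
            (volume.restrict (Set.Ioo (0:ℝ) (2*Real.pi))) := hφsubi.const_mul 2
        have hintXY : Integrable (fun t : ℝ =>
            (Complex.exp (Complex.I*(t:ℂ)) ^ ((N:ℤ)+1) * g2 t
              + Complex.exp (Complex.I*(t:ℂ)) ^ (-(N:ℤ)) * g2 t) - 2 * g2 t)
            (volume.restrict (Set.Ioo (0:ℝ) (2*Real.pi))) := (hintX1.add hintX2).sub hintY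
        have hintX : Integrable (fun t : ℝ =>
            Complex.exp (Complex.I*(t:ℂ)) ^ ((N:ℤ)+1) * g2 t
              + Complex.exp (Complex.I*(t:ℂ)) ^ (-(N:ℤ)) * g2 t)
            (volume.restrict (Set.Ioo (0:ℝ) (2*Real.pi))) := hintX1.add hintX2
        rw [e1, e2, e3, MeasureTheory.integral_add hintXY hintZ,
          MeasureTheory.integral_sub hintX hintY,
          MeasureTheory.integral_add hintX1 hintX2,
          MeasureTheory.integral_const_mul, MeasureTheory.integral_const_mul]
      have hT3 := hRLzpow g2 hg2i (fun N => (N:ℤ)+1) hcoc1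
      have hT4 := hRLzpow g2 hg2i (fun N => -(N:ℤ)) hcoc2
      have hcomb := (((hT3.add hT4).sub_const
          ((2:ℂ) * ∫ t in Set.Ioo (0:ℝ) (2*Real.pi), g2 t)).add_const
          ((2:ℂ) * ∫ t in Set.Ioo (0:ℝ) (2*Real.pi), φ (2*Real.pi - t))).const_mul (1/2 : ℂ)
      have hval : (-2 : ℂ) * L = (1/2 : ℂ) * (((0:ℂ) + 0)
          - (2:ℂ) * (∫ t in Set.Ioo (0:ℝ) (2*Real.pi), g2 t)
          + (2:ℂ) * ∫ t in Set.Ioo (0:ℝ) (2*Real.pi), φ (2*Real.pi - t)) := by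
        rw [hL]; ring
      rw [hval]
      exact Tendsto.congr (fun N => (hEdecomp N).symm) hcomb
    have hmain := Tendsto.sub
      (hA.const_mul ((Real.cos (Real.pi*α) : ℂ)))
      ((hB.const_mul (1/(2*(Real.pi:ℂ)))).const_mul (Complex.I * (Real.sin (Real.pi*α) : ℂ)))
    have hveq : (Real.cos (Real.pi*α) : ℂ) * φ 0
          + Complex.I / (Real.pi:ℂ) * (Real.sin (Real.pi*α):ℂ) * L
        = (Real.cos (Real.pi*α) : ℂ) * φ 0
          - Complex.I * (Real.sin (Real.pi*α):ℂ) * ((1/(2*(Real.pi:ℂ))) * (-2*L)) := by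
      have hπ : (Real.pi : ℂ) ≠ 0 := Complex.ofReal_ne_zero.2 (ne_of_gt pi_pos)
      field_simp
      ring
    rw [hveq]
    exact Tendsto.congr (fun N => (hrw N).symm) hmain
end
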